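/- For any graph G, max{λ(G), λ(Ḡ)} ≤ λ_g(G) ≤ min{λ(G), λ(Ḡ)} + 1. In particular, if λ(G) ≠ λ(Ḡ), then λ_g(G) = max{λ(G), λ(Ḡ)}. -/

import Mathlib

variable {V : Type*}

/-- `S` is a dominating set of `G`: every vertex outside `S` has a neighbor in `S`. -/
def IsDominatingSet (G : SimpleGraph V) (S : Set V) : Prop :=
  ∀ v ∉ S, (G.neighborSet v ∩ S).Nonempty

/-- `S` is a locating-dominating set of `G`. -/
def IsLDSet (G : SimpleGraph V) (S : Set V) : Prop :=
  IsDominatingSet G S ∧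
    ∀ u ∉ S, ∀ v ∉ S, G.neighborSet u ∩ S = G.neighborSet v ∩ S → u = v

/-- The location-domination number of `G`. -/
noncomputable def ldNum [Fintype V] (G : SimpleGraph V) : ℕ :=
  sInf {n | ∃ S : Set V, IsLDSet G S ∧ S.ncard = n}

/-- `S` is a global LD-set of `G`: an LD-set of both `G` and its complement. -/
def IsGlobalLDSet (G : SimpleGraph V) (S : Set V) : Prop :=
  IsLDSet G S ∧ IsLDSet Gᶜ S

/-- The global location-domination number of `G`. -/
noncomputable def gldNum [Fintype V] (G : SimpleGraph V) : ℕ :=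
  sInf {n | ∃ S : Set V, IsGlobalLDSet G S ∧ S.ncard = n}

/-!
Outside an LD-set `S` of `G`, the trace of a vertex's `Gᶜ`-neighbourhood on `S` is the complement
in `S` of its `G`-trace, so `S` still separates vertices in `Gᶜ`; it fails to dominate in `Gᶜ` only
at a vertex adjacent to all of `S`, and separation in `G` allows at most one such vertex. Adding it
gives a global LD-set of size at most `|S| + 1`. As `Gᶜᶜ = G`, the same holds for `Gᶜ`, and the
lower bound is immediate since a global LD-set is an LD-set of both graphs.
-/

open SimpleGraph

section LDSet

variable {G : SimpleGraph V} {S T : Set V}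

theorem isLDSet_univ (G : SimpleGraph V) : IsLDSet G Set.univ :=
  ⟨fun v hv => (hv (Set.mem_univ v)).elim, fun u hu => (hu (Set.mem_univ u)).elim⟩

theorem IsLDSet.mono (hS : IsLDSet G S) (hST : S ⊆ T) : IsLDSet G T := by
  refine ⟨fun v hv => ?_, fun u hu w hw h => ?_⟩
  · obtain ⟨s, hsv, hsS⟩ := hS.1 v fun h => hv (hST h)
    exact ⟨s, hsv, hST hsS⟩
  · refine hS.2 u (fun h => hu (hST h)) w (fun h => hw (hST h)) ?_
    simpa only [Set.inter_assoc, Set.inter_eq_right.mpr hST] using congrArg (· ∩ S) h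

theorem IsLDSet.eq_of_subset_neighborSet (hS : IsLDSet G S) {u w : V} (hu : u ∉ S) (hw : w ∉ S)
    (hSu : S ⊆ G.neighborSet u) (hSw : S ⊆ G.neighborSet w) : u = w :=
  hS.2 u hu w hw (by rw [Set.inter_eq_right.mpr hSu, Set.inter_eq_right.mpr hSw])

theorem compl_neighborSet_inter_of_notMem {u : V} (hu : u ∉ S) :
    Gᶜ.neighborSet u ∩ S = S \ G.neighborSet u := by
  ext s
  simp only [neighborSet_compl, Set.mem_inter_iff, Set.mem_sdiff, Set.mem_compl_iff,
    Set.mem_singleton_iff]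
  exact ⟨fun h => ⟨h.2, h.1.1⟩, fun h => ⟨⟨h.2, fun hsu => hu (hsu ▸ h.1)⟩, h.1⟩⟩

theorem IsLDSet.compl (hS : IsLDSet G S) (hdom : ∀ u ∉ S, ¬S ⊆ G.neighborSet u) :
    IsLDSet Gᶜ S := by
  refine ⟨fun u hu => ?_, fun u hu w hw h => hS.2 u hu w hw ?_⟩
  · rw [compl_neighborSet_inter_of_notMem hu]
    exact Set.sdiff_nonempty.mpr (hdom u hu)
  · rw [compl_neighborSet_inter_of_notMem hu, compl_neighborSet_inter_of_notMem hw] at h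
    rw [Set.inter_comm, ← Set.sdiff_sdiff_right_self, h, Set.sdiff_sdiff_right_self,
      Set.inter_comm]

theorem IsLDSet.exists_isGlobalLDSet_ncard_le (hS : IsLDSet G S) :
    ∃ T, IsGlobalLDSet G T ∧ T.ncard ≤ S.ncard + 1 := by
  by_cases hfull : ∃ v ∉ S, S ⊆ G.neighborSet v
  · obtain ⟨v, hv, hSv⟩ := hfull
    have hST := Set.subset_insert v S
    refine ⟨insert v S, ⟨hS.mono hST, (hS.mono hST).compl fun u hu hsub => ?_⟩,
      Set.ncard_insert_le v S⟩
    rw [Set.mem_insert_iff, not_or] at hu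
    exact hu.1 (hS.eq_of_subset_neighborSet hu.2 hv (hST.trans hsub) hSv)
  · push Not at hfull
    exact ⟨S, ⟨hS, hS.compl hfull⟩, Nat.le_succ _⟩

theorem isGlobalLDSet_compl : IsGlobalLDSet Gᶜ S ↔ IsGlobalLDSet G S := by
  rw [IsGlobalLDSet, IsGlobalLDSet, compl_compl, and_comm]

end LDSet

section Numbers

variable [Fintype V] (G : SimpleGraph V)

theorem ldNum_le_ncard {S : Set V} (hS : IsLDSet G S) : ldNum G ≤ S.ncard :=
  Nat.sInf_le ⟨S, hS, rfl⟩

theorem gldNum_le_ncard {S : Set V} (hS : IsGlobalLDSet G S) : gldNum G ≤ S.ncard :=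
  Nat.sInf_le ⟨S, hS, rfl⟩

theorem exists_isLDSet_ncard_eq_ldNum : ∃ S, IsLDSet G S ∧ S.ncard = ldNum G :=
  Nat.sInf_mem (s := {n | ∃ S : Set V, IsLDSet G S ∧ S.ncard = n}) ⟨_, _, isLDSet_univ G, rfl⟩

theorem exists_isGlobalLDSet_ncard_eq_gldNum : ∃ S, IsGlobalLDSet G S ∧ S.ncard = gldNum G :=
  Nat.sInf_mem (s := {n | ∃ S : Set V, IsGlobalLDSet G S ∧ S.ncard = n})
    ⟨_, _, ⟨isLDSet_univ G, isLDSet_univ Gᶜ⟩, rfl⟩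

theorem gldNum_compl : gldNum Gᶜ = gldNum G := by
  simp only [gldNum, isGlobalLDSet_compl]

theorem ldNum_le_gldNum : ldNum G ≤ gldNum G := by
  obtain ⟨S, hS, hcard⟩ := exists_isGlobalLDSet_ncard_eq_gldNum G
  exact hcard ▸ ldNum_le_ncard G hS.1

theorem gldNum_le_ldNum_add_one : gldNum G ≤ ldNum G + 1 := by
  obtain ⟨S, hS, hcard⟩ := exists_isLDSet_ncard_eq_ldNum G
  obtain ⟨T, hT, hTS⟩ := hS.exists_isGlobalLDSet_ncard_le
  exact (gldNum_le_ncard G hT).trans (hcard ▸ hTS)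

end Numbers

theorem stmt12 [Fintype V] (G : SimpleGraph V) :
    (max (ldNum G) (ldNum Gᶜ) ≤ gldNum G ∧
      gldNum G ≤ min (ldNum G) (ldNum Gᶜ) + 1) ∧
    (ldNum G ≠ ldNum Gᶜ → gldNum G = max (ldNum G) (ldNum Gᶜ)) := by
  have hlow := ldNum_le_gldNum G
  have hlow_compl := gldNum_compl G ▸ ldNum_le_gldNum Gᶜ
  have hup := gldNum_le_ldNum_add_one G
  have hup_compl := gldNum_compl G ▸ gldNum_le_ldNum_add_one Gᶜ
  exact ⟨⟨max_le hlow hlow_compl, by omega⟩, fun _ => by omega⟩
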